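/- Let Λ be a graph containing a geodesic path P with 2r+1 vertices. Let Ω be a graph with adjacent vertices ω, ω₁. Then any two vertices (φ₁, p₁) and (φ₂, p₂) of Ω ≀ Λ such that p₁, p₂ ∈ V(P) and both φ₁, φ₂ take values in {ω, ω₁} with support in V(P) are at distance at most 2(6r+1) in Ω ≀ Λ. -/

import Mathlib

open SimpleGraph

/-- Restricted wreath product of graphs: `Ω` (states, base `ω`) by `Λ` (lamps). -/
def GraphWreath {W V : Type*} (Ω : SimpleGraph W) (ω : W) (Λ : SimpleGraph V) :
    SimpleGraph ({f : V → W // {u | f u ≠ ω}.Finite} × V) where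
  Adj x y :=
    (x.2 = y.2 ∧ (∀ u, u ≠ x.2 → x.1.1 u = y.1.1 u) ∧ Ω.Adj (x.1.1 x.2) (y.1.1 x.2))
    ∨ (x.1 = y.1 ∧ Λ.Adj x.2 y.2)
  symm := by
    constructor
    rintro ⟨f, v⟩ ⟨g, w⟩ (⟨h1, h2, h3⟩ | ⟨h1, h2⟩)
    · cases h1
      exact Or.inl ⟨rfl, fun u hu => (h2 u hu).symm, h3.symm⟩
    · exact Or.inr ⟨h1.symm, h2.symm⟩
  loopless := by
    constructor
    rintro ⟨f, v⟩ (⟨_, _, h⟩ | ⟨_, h⟩)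
    · exact Ω.irrefl h
    · exact Λ.irrefl h

/-! Every such vertex is within `6r + 1` of the configuration with all lamps at `ω` and the
lamplighter at the far end `P (2r)` of the path: walk back to `P 0` (at most `2r` steps), then
sweep along the path to `P (2r)`, switching each lit lamp from `ω₁` to `ω` on the way
(`2r` moves and at most `2r + 1` switches). The bound follows from the triangle inequality. -/

lemma SimpleGraph.exists_walk_of_adj_succ {V : Type*} {Λ : SimpleGraph V} {n : ℕ}
    (P : Fin (n + 1) → V)
    (hP : ∀ i : Fin (n + 1), ∀ h : (i : ℕ) + 1 < n + 1,
      Λ.Adj (P i) (P ⟨(i : ℕ) + 1, h⟩))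
    (k : ℕ) (hk : k ≤ n) :
    ∃ w : Λ.Walk (P 0) (P ⟨k, by omega⟩),
      w.length = k ∧ ∀ i : Fin (n + 1), (i : ℕ) ≤ k → P i ∈ w.support := by
  induction k with
  | zero =>
    refine ⟨Walk.nil, rfl, fun i hi => ?_⟩
    obtain rfl : i = 0 := Fin.ext (by simpa using hi)
    simp
  | succ k ih =>
    obtain ⟨w, hw_len, hw_supp⟩ := ih (by omega)
    refine ⟨w.concat (hP ⟨k, by omega⟩ (by show k + 1 < n + 1; omega)), by simp [hw_len], fun i hi => ?_⟩
    rw [Walk.support_concat, List.mem_append, List.mem_singleton]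
    rcases Nat.lt_or_eq_of_le hi with hi | hi
    · exact Or.inl (hw_supp i (by omega))
    · exact Or.inr (congrArg P (Fin.ext hi))

namespace GraphWreath

variable {W V : Type*} {Ω : SimpleGraph W} {ω : W} {Λ : SimpleGraph V}

abbrev Config (V : Type*) (ω : W) := {f : V → W // {u | f u ≠ ω}.Finite}

def const (V : Type*) (ω : W) : Config V ω :=
  ⟨fun _ => ω, by simp⟩

def update [DecidableEq V] (f : Config V ω) (p : V) (a : W) : Config V ω :=
  ⟨Function.update f.1 p a, (f.2.insert p).subset fun u hu => by
    by_cases h : u = p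
    · exact Or.inl h
    · exact Or.inr (by simpa [Function.update_of_ne h] using hu)⟩

lemma adj_update [DecidableEq V] (f : Config V ω) (p : V) {a : W} (h : Ω.Adj (f.1 p) a) :
    (GraphWreath Ω ω Λ).Adj (f, p) (update f p a, p) :=
  Or.inl ⟨rfl, fun _ hu => (Function.update_of_ne hu _ _).symm, by simpa [update] using h⟩

lemma edist_update_le_one [DecidableEq V] (f : Config V ω) (p : V)
    (h : f.1 p ≠ ω → Ω.Adj (f.1 p) ω) :
    (GraphWreath Ω ω Λ).edist (f, p) (update f p ω, p) ≤ 1 := by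
  by_cases hp : f.1 p = ω
  · have : update f p ω = f := Subtype.ext (by simp [update, hp])
    simp [this]
  · exact (edist_eq_one_iff_adj.2 (adj_update f p (h hp))).le

def fiberHom (f : Config V ω) : Λ →g GraphWreath Ω ω Λ where
  toFun v := (f, v)
  map_rel' h := Or.inr ⟨rfl, h⟩

lemma edist_le_length (f : Config V ω) {u v : V} (q : Λ.Walk u v) :
    (GraphWreath Ω ω Λ).edist (f, u) (f, v) ≤ q.length :=
  (edist_le (q.map (fiberHom f))).trans_eq (by rw [Walk.length_map])

lemma edist_const_le_of_support {u v : V} (w : Λ.Walk u v) (f : Config V ω)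
    (hval : ∀ a, f.1 a ≠ ω → Ω.Adj (f.1 a) ω)
    (hsupp : ∀ a, f.1 a ≠ ω → a ∈ w.support) :
    (GraphWreath Ω ω Λ).edist (f, u) (const V ω, v) ≤ (2 * w.length + 1 : ℕ) := by
  classical
  induction w generalizing f with
  | @nil u =>
    have hoff : update f u ω = const V ω := Subtype.ext <| funext fun a => by
      by_cases ha : a = u
      · simp [update, const, ha]
      · simp only [update, const, Function.update_of_ne ha]
        by_contra hfa
        simpa [ha] using hsupp a hfa
    simpa [hoff] using edist_update_le_one f u (hval u)
  | @cons u u' v h w ih =>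
    set g := update f u ω
    have hg : ∀ a, g.1 a ≠ ω → a ≠ u ∧ g.1 a = f.1 a := fun a ha => by
      have hau : a ≠ u := by rintro rfl; simp [g, update] at ha
      exact ⟨hau, Function.update_of_ne hau _ _⟩
    have ih' := ih g (fun a ha => (hg a ha).2 ▸ hval a ((hg a ha).2 ▸ ha)) fun a ha => by
      obtain ⟨hau, hga⟩ := hg a ha
      simpa [hau] using hsupp a (hga ▸ ha)
    calc (GraphWreath Ω ω Λ).edist (f, u) (const V ω, v)
        ≤ (GraphWreath Ω ω Λ).edist (f, u) (g, u) + (GraphWreath Ω ω Λ).edist (g, u) (g, u')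
          + (GraphWreath Ω ω Λ).edist (g, u') (const V ω, v) :=
          ((GraphWreath Ω ω Λ).edist_triangle (v := (g, u'))).trans
            (add_le_add_left (GraphWreath Ω ω Λ).edist_triangle _)
      _ ≤ 1 + 1 + (2 * w.length + 1 : ℕ) := by
          gcongr
          · exact edist_update_le_one f u (hval u)
          · exact (edist_eq_one_iff_adj.2 (Or.inr ⟨rfl, h⟩)).le
      _ = (2 * (Walk.cons h w).length + 1 : ℕ) := by push_cast [Walk.length_cons]; ring

lemma edist_const_le_of_mem_support {u v p : V} (w : Λ.Walk u v) (f : Config V ω)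
    (hval : ∀ a, f.1 a ≠ ω → Ω.Adj (f.1 a) ω)
    (hsupp : ∀ a, f.1 a ≠ ω → a ∈ w.support) (hp : p ∈ w.support) :
    (GraphWreath Ω ω Λ).edist (f, p) (const V ω, v) ≤ (3 * w.length + 1 : ℕ) := by
  classical
  have hback : (GraphWreath Ω ω Λ).edist (f, p) (f, u) ≤ w.length := by
    rw [edist_comm]
    exact (edist_le_length f (w.takeUntil p hp)).trans
      (by exact_mod_cast w.length_takeUntil_le_length hp)
  calc (GraphWreath Ω ω Λ).edist (f, p) (const V ω, v)
      ≤ (GraphWreath Ω ω Λ).edist (f, p) (f, u)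
        + (GraphWreath Ω ω Λ).edist (f, u) (const V ω, v) :=
          (GraphWreath Ω ω Λ).edist_triangle
    _ ≤ w.length + (2 * w.length + 1 : ℕ) :=
        add_le_add hback (edist_const_le_of_support w f hval hsupp)
    _ = (3 * w.length + 1 : ℕ) := by push_cast; ring

end GraphWreath

theorem stmt_16_general {W V : Type*} (Ω : SimpleGraph W) (ω ω₁ : W) (Λ : SimpleGraph V)
    (hadj : Ω.Adj ω ω₁)
    (r : ℕ) (P : Fin (2 * r + 1) → V)
    (hwalk : ∀ i : Fin (2 * r + 1), ∀ h : (i : ℕ) + 1 < 2 * r + 1,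
      Λ.Adj (P i) (P ⟨(i : ℕ) + 1, h⟩))
    (x y : {f : V → W // {u | f u ≠ ω}.Finite} × V)
    (hvalx : ∀ u, x.1.1 u = ω ∨ x.1.1 u = ω₁)
    (hsuppx : ∀ u, x.1.1 u ≠ ω → u ∈ Set.range P)
    (hposx : x.2 ∈ Set.range P)
    (hvaly : ∀ u, y.1.1 u = ω ∨ y.1.1 u = ω₁)
    (hsuppy : ∀ u, y.1.1 u ≠ ω → u ∈ Set.range P)
    (hposy : y.2 ∈ Set.range P) :
    (GraphWreath Ω ω Λ).dist x y ≤ 2 * (6 * r + 1) := by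
  obtain ⟨w, hw_len, hw_supp⟩ := exists_walk_of_adj_succ P hwalk (2 * r) le_rfl
  set c := (GraphWreath.const V ω, P ⟨2 * r, by omega⟩)
  have hmid : ∀ z : GraphWreath.Config V ω × V, (∀ u, z.1.1 u = ω ∨ z.1.1 u = ω₁) →
      (∀ u, z.1.1 u ≠ ω → u ∈ Set.range P) → z.2 ∈ Set.range P →
      (GraphWreath Ω ω Λ).edist z c ≤ (6 * r + 1 : ℕ) := by
    rintro ⟨f, p⟩ hval hsupp ⟨i, rfl⟩
    have hlit : ∀ u, f.1 u ≠ ω → Ω.Adj (f.1 u) ω :=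
      fun u hu => (hval u).resolve_left hu ▸ hadj.symm
    have hsupp' : ∀ u, f.1 u ≠ ω → u ∈ w.support := fun u hu => by
      obtain ⟨j, rfl⟩ := hsupp u hu
      exact hw_supp j (by omega)
    simpa [hw_len, ← mul_assoc] using
      GraphWreath.edist_const_le_of_mem_support w f hlit hsupp' (hw_supp i (by omega))
  refine ENat.toNat_le_of_le_natCast ?_
  calc (GraphWreath Ω ω Λ).edist x y
      ≤ (GraphWreath Ω ω Λ).edist x c + (GraphWreath Ω ω Λ).edist y c := by
        rw [edist_comm (u := y)]
        exact (GraphWreath Ω ω Λ).edist_triangle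
    _ ≤ (6 * r + 1 : ℕ) + (6 * r + 1 : ℕ) :=
        add_le_add (hmid x hvalx hsuppx hposx) (hmid y hvaly hsuppy hposy)
    _ = (2 * (6 * r + 1) : ℕ) := by push_cast; ring

/-- if `P` is a geodesic path in `Λ` with `2r+1` vertices and `ω, ω₁` are
adjacent vertices of `Ω`, then any two vertices `(φ₁, p₁)`, `(φ₂, p₂)` of `Ω ≀ Λ` with
`p₁, p₂` on `P` and `φ₁, φ₂` taking values in `{ω, ω₁}` with support on `P` are at
distance at most `2(6r + 1)` in `Ω ≀ Λ`. -/
theorem stmt_16 {W V : Type*} (Ω : SimpleGraph W) (ω ω₁ : W) (Λ : SimpleGraph V)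
    (hadj : Ω.Adj ω ω₁)
    (r : ℕ) (P : Fin (2 * r + 1) → V)
    (hwalk : ∀ i : Fin (2 * r + 1), ∀ h : (i : ℕ) + 1 < 2 * r + 1,
      Λ.Adj (P i) (P ⟨(i : ℕ) + 1, h⟩))
    (hgeo : ∀ i j : Fin (2 * r + 1), (i : ℕ) ≤ (j : ℕ) →
      Λ.dist (P i) (P j) = (j : ℕ) - (i : ℕ))
    (x y : {f : V → W // {u | f u ≠ ω}.Finite} × V)
    (hvalx : ∀ u, x.1.1 u = ω ∨ x.1.1 u = ω₁)
    (hsuppx : ∀ u, x.1.1 u ≠ ω → u ∈ Set.range P)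
    (hposx : x.2 ∈ Set.range P)
    (hvaly : ∀ u, y.1.1 u = ω ∨ y.1.1 u = ω₁)
    (hsuppy : ∀ u, y.1.1 u ≠ ω → u ∈ Set.range P)
    (hposy : y.2 ∈ Set.range P) :
    (GraphWreath Ω ω Λ).dist x y ≤ 2 * (6 * r + 1) :=
  stmt_16_general Ω ω ω₁ Λ hadj r P hwalk x y hvalx hsuppx hposx hvaly hsuppy hposy
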